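/- Let (A, p_A) and (B, p_B) be independent ensembles of functions U^n → Im A and V^n → Im B respectively, each satisfying the strong hash condition with constants (α_A, β_A) and (α_B, β_B). Let a and b be drawn uniformly and independently from Im A and Im B. Then for every nonempty T ⊆ U^n × V^n: P({(A,B,a,b) : T ∩ (C_A(a) × C_B(b)) = ∅}) ≤ α_Aα_B − 1 + |Im B|·(max_{v∈T_V}|T_{U|V}(v)|)·α_A(β_B+1)/|T| + |Im A|·(max_{u∈T_U}|T_{V|U}(u)|)·α_B(β_A+1)/|T| + |Im A||Im B|·(β_A+β_B+β_Aβ_B+1)/|T|. -/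

import Mathlib

open Finset
open scoped Classical

/-- Collision probability `p_A({A : Au = Au'})` for an ensemble of functions. -/
noncomputable def collP {𝒜 X B : Type*} [Fintype 𝒜] (p : 𝒜 → ℝ)
    (F : 𝒜 → X → B) (u u' : X) : ℝ :=
  ∑ a : 𝒜, if F a u = F a u' then p a else 0

/-- The strong (α,β)-hash condition for an ensemble of functions `X → B`. -/
noncomputable def StrongHash {𝒜 X B : Type*} [Fintype 𝒜] [Fintype X] [Fintype B]
    (p : 𝒜 → ℝ) (F : 𝒜 → X → B) (α β : ℝ) : Prop :=
  ∀ u : X,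
    ∑ u' ∈ (Finset.univ.erase u).filter
        (fun u' => α / (Fintype.card B : ℝ) < collP p F u u'),
      collP p F u u' ≤ β

/-! Second moment method for `N(A, B, a, b) = |T ∩ (C_A(a) × C_B(b))|`. Chebyshev at `N = 0` gives
`P(N = 0) ≤ E[N²] / E[N]² - 1`. As `a`, `b` are uniform, `E[N] = |T| / (|Im A| |Im B|)` and
`E[N²] = Σ_{w, w' ∈ T} p_A(A w₁ = A w'₁) p_B(B w₂ = B w'₂) / (|Im A| |Im B|)`. The strong hash
condition gives `p_A(A u = A u') ≤ α_A / |Im A| + e_A(u, u')` with `Σ_{u'} e_A(u, u') ≤ β_A + 1`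
(the diagonal contributes the `1`), and likewise for `B`. Expanding the product, a sum
`Σ_{w' ∈ T} e_B(w₂, w'₂)` is at most `max_v |T_{U|V}(v)| (β_B + 1)`, which yields the four terms. -/

section Collision

variable {𝒜 X B : Type*} [Fintype 𝒜] {p : 𝒜 → ℝ}

lemma collP_nonneg (hp : ∀ a, 0 ≤ p a) (F : 𝒜 → X → B) (u u' : X) : 0 ≤ collP p F u u' :=
  sum_nonneg fun a _ => by split_ifs <;> simp [hp a]

lemma collP_self (hp1 : ∑ a, p a = 1) (F : 𝒜 → X → B) (u : X) : collP p F u u = 1 := by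
  simp [collP, hp1]

variable [Fintype B]

/-- The diagonal plus the collisions counted in `StrongHash`: what exceeds the level `α / |B|`. -/
noncomputable def collExcess (p : 𝒜 → ℝ) (F : 𝒜 → X → B) (α : ℝ) (u u' : X) : ℝ :=
  if u = u' ∨ α / Fintype.card B < collP p F u u' then collP p F u u' else 0

lemma collExcess_nonneg (hp : ∀ a, 0 ≤ p a) (F : 𝒜 → X → B) (α : ℝ) (u u' : X) :
    0 ≤ collExcess p F α u u' := by
  unfold collExcess
  split_ifs
  exacts [collP_nonneg hp F u u', le_rfl]

lemma collP_le_add_collExcess (F : 𝒜 → X → B) {α : ℝ} (hα : 0 ≤ α) (u u' : X) :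
    collP p F u u' ≤ α / Fintype.card B + collExcess p F α u u' := by
  unfold collExcess
  split_ifs with h
  · linarith [show 0 ≤ α / Fintype.card B by positivity]
  · push Not at h
    linarith [h.2]

lemma StrongHash.sum_collExcess_le [Fintype X] {F : 𝒜 → X → B} {α β : ℝ}
    (h : StrongHash p F α β) (hp1 : ∑ a, p a = 1) (u : X) :
    ∑ u', collExcess p F α u u' ≤ β + 1 := by
  rw [← add_sum_erase _ _ (mem_univ u), collExcess, if_pos (Or.inl rfl), collP_self hp1,
    add_comm]
  gcongr
  refine le_of_eq_of_le ?_ (h u)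
  rw [sum_filter]
  refine sum_congr rfl fun u' hu' => ?_
  simp [collExcess, (ne_of_mem_erase hu').symm]

end Collision

lemma sum_comp_le_sup_card_fiber_mul_sum {γ δ : Type*} [Fintype δ] [DecidableEq δ] (s : Finset γ)
    (g : γ → δ) {f : δ → ℝ} (hf : ∀ d, 0 ≤ f d) :
    ∑ x ∈ s, f (g x) ≤ ((s.image g).sup fun d => #{x ∈ s | g x = d} : ℕ) * ∑ d, f d := by
  rw [sum_comp, mul_sum]
  calc ∑ d ∈ s.image g, #{x ∈ s | g x = d} • f d
      ≤ ∑ d ∈ s.image g, ((s.image g).sup fun d => #{x ∈ s | g x = d} : ℕ) * f d := by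
        gcongr with d hd
        rw [nsmul_eq_mul]
        gcongr
        · exact hf d
        · exact le_sup (f := fun d => #{x ∈ s | g x = d}) hd
    _ ≤ _ := sum_le_sum_of_subset_of_nonneg (subset_univ _) fun d _ _ =>
        mul_nonneg (Nat.cast_nonneg _) (hf d)

lemma sum_sq_card_fiber {γ δ : Type*} [Fintype δ] [DecidableEq δ] (s : Finset γ) (f : γ → δ) :
    ∑ y, (#{x ∈ s | f x = y} : ℝ) ^ 2 = ∑ x ∈ s, ∑ x' ∈ s, if f x = f x' then 1 else 0 := by
  simp_rw [sq, natCast_card_filter, sum_mul_sum, ite_zero_mul_ite_zero, mul_one]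
  rw [sum_comm]
  refine sum_congr rfl fun x _ => ?_
  rw [sum_comm]
  refine sum_congr rfl fun x' _ => ?_
  simp_rw [ite_and, sum_ite_eq, mem_univ, if_true, eq_comm]

/-- Chebyshev's inequality at `N = 0`: `P(N = 0) ≤ Var N / (E N)²`. -/
lemma sum_ite_eq_zero_le_moment_ratio_sub_one {Ω : Type*} [Fintype Ω] {μ N : Ω → ℝ}
    (hμ : ∀ ω, 0 ≤ μ ω) (hμ1 : ∑ ω, μ ω = 1) (hN : ∑ ω, μ ω * N ω ≠ 0) :
    ∑ ω, (if N ω = 0 then μ ω else 0) ≤ (∑ ω, μ ω * N ω ^ 2) / (∑ ω, μ ω * N ω) ^ 2 - 1 := by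
  set E := ∑ ω, μ ω * N ω
  have hvar : ∑ ω, μ ω * (N ω - E) ^ 2 = ∑ ω, μ ω * N ω ^ 2 - E ^ 2 := by
    have hexp : ∀ ω, μ ω * (N ω - E) ^ 2 = μ ω * N ω ^ 2 - 2 * E * (μ ω * N ω) + E ^ 2 * μ ω :=
      fun ω => by ring
    simp_rw [hexp, sum_add_distrib, sum_sub_distrib, ← mul_sum, hμ1]
    ring
  have hpt : E ^ 2 * ∑ ω, (if N ω = 0 then μ ω else 0) ≤ ∑ ω, μ ω * (N ω - E) ^ 2 := by
    rw [mul_sum]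
    refine sum_le_sum fun ω _ => ?_
    split_ifs with h
    · rw [h, zero_sub, neg_sq, mul_comm]
    · rw [mul_zero]
      exact mul_nonneg (hμ ω) (sq_nonneg _)
  rw [le_sub_iff_add_le, le_div_iff₀ (by positivity)]
  linarith

lemma collP_mul_collP {𝒜 ℬ X Y BA BB : Type*} [Fintype 𝒜] [Fintype ℬ] (p : 𝒜 → ℝ)
    (q : ℬ → ℝ) (F : 𝒜 → X → BA) (G : ℬ → Y → BB) (w w' : X × Y) :
    collP p F w.1 w'.1 * collP q G w.2 w'.2 =
      ∑ A, ∑ B, p A * q B * if (F A w.1, G B w.2) = (F A w'.1, G B w'.2) then 1 else 0 := by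
  rw [collP, collP, sum_mul_sum]
  refine sum_congr rfl fun A _ => sum_congr rfl fun B _ => ?_
  simp only [Prod.mk.injEq]
  split_ifs <;> simp_all

section Sampling

variable {𝒜 ℬ X Y BA BB : Type*} [Fintype BA] [Fintype BB] {p : 𝒜 → ℝ} {q : ℬ → ℝ}

/-- The law of `ω = (A, B, a, b)`. -/
noncomputable def jointProb (p : 𝒜 → ℝ) (q : ℬ → ℝ) (ω : 𝒜 × ℬ × BA × BB) : ℝ :=
  p ω.1 * q ω.2.1 * (1 / Fintype.card BA) * (1 / Fintype.card BB)

/-- `|T ∩ (C_A(a) × C_B(b))|` at `ω = (A, B, a, b)`. -/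
noncomputable def cellCount (F : 𝒜 → X → BA) (G : ℬ → Y → BB) (T : Finset (X × Y))
    (ω : 𝒜 × ℬ × BA × BB) : ℕ :=
  #{w ∈ T | (F ω.1 w.1, G ω.2.1 w.2) = ω.2.2}

lemma jointProb_nonneg (hp : ∀ a, 0 ≤ p a) (hq : ∀ b, 0 ≤ q b) (ω : 𝒜 × ℬ × BA × BB) :
    0 ≤ jointProb p q ω := by
  have := hp ω.1
  have := hq ω.2.1
  unfold jointProb
  positivity

variable [Fintype 𝒜] [Fintype ℬ]

lemma sum_jointProb_mul (g : 𝒜 × ℬ × BA × BB → ℝ) :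
    ∑ ω, jointProb p q ω * g ω =
      (∑ A, ∑ B, p A * q B * ∑ y, g (A, B, y)) / (Fintype.card BA * Fintype.card BB) := by
  simp only [jointProb, Fintype.sum_prod_type (α₁ := 𝒜), Fintype.sum_prod_type (α₁ := ℬ),
    sum_div, mul_sum]
  refine sum_congr rfl fun A _ => sum_congr rfl fun B _ => sum_congr rfl fun y _ => ?_
  ring

lemma sum_jointProb [Nonempty BA] [Nonempty BB] (hp1 : ∑ a, p a = 1) (hq1 : ∑ b, q b = 1) :
    ∑ ω : 𝒜 × ℬ × BA × BB, jointProb p q ω = 1 := by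
  have h := sum_jointProb_mul (p := p) (q := q) (BA := BA) (BB := BB) 1
  simp only [mul_one, Pi.one_apply, sum_const, card_univ, Fintype.card_prod, nsmul_eq_mul,
    Nat.cast_mul, ← sum_mul, ← mul_sum, hq1, hp1] at h
  rw [h]
  field_simp

variable (F : 𝒜 → X → BA) (G : ℬ → Y → BB) (T : Finset (X × Y))

lemma sum_jointProb_mul_cellCount (hp1 : ∑ a, p a = 1) (hq1 : ∑ b, q b = 1) :
    ∑ ω, jointProb p q ω * cellCount F G T ω = #T / (Fintype.card BA * Fintype.card BB) := by
  have hfib (A : 𝒜) (B : ℬ) : ∑ y, (cellCount F G T (A, B, y) : ℝ) = #T := by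
    simp only [cellCount]
    rw [← Nat.cast_sum, ← card_eq_sum_card_fiberwise fun _ _ => mem_coe.2 (mem_univ _)]
  simp only [sum_jointProb_mul, hfib, ← sum_mul, ← mul_sum, hq1, hp1, one_mul]

lemma sum_jointProb_mul_cellCount_sq :
    ∑ ω, jointProb p q ω * (cellCount F G T ω : ℝ) ^ 2 =
      (∑ w ∈ T, ∑ w' ∈ T, collP p F w.1 w'.1 * collP q G w.2 w'.2) /
        (Fintype.card BA * Fintype.card BB) := by
  have hfib (A : 𝒜) (B : ℬ) : ∑ y, (cellCount F G T (A, B, y) : ℝ) ^ 2 =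
      ∑ w ∈ T, ∑ w' ∈ T, if (F A w.1, G B w.2) = (F A w'.1, G B w'.2) then 1 else 0 :=
    sum_sq_card_fiber T fun w => (F A w.1, G B w.2)
  simp only [sum_jointProb_mul, hfib, collP_mul_collP, mul_sum]
  congr 1
  calc _ = ∑ A : 𝒜, ∑ w ∈ T, ∑ w' ∈ T, ∑ B : ℬ,
        p A * q B * if (F A w.1, G B w.2) = (F A w'.1, G B w'.2) then 1 else 0 :=
        sum_congr rfl fun A _ => by rw [sum_comm]; exact sum_congr rfl fun w _ => sum_comm
    _ = _ := by rw [sum_comm]; exact sum_congr rfl fun w _ => sum_comm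

end Sampling

section CollisionSum

variable {𝒜 ℬ X Y BA BB : Type*} [Fintype 𝒜] [Fintype ℬ] [Fintype X] [Fintype Y]
  [DecidableEq X] [DecidableEq Y] [Fintype BA] [Fintype BB] {p : 𝒜 → ℝ} {q : ℬ → ℝ}
  {F : 𝒜 → X → BA} {G : ℬ → Y → BB}
  {αA βA αB βB : ℝ}

lemma sum_collP_mul_collP_le (hp : ∀ a, 0 ≤ p a) (hp1 : ∑ a, p a = 1) (hq : ∀ b, 0 ≤ q b)
    (hq1 : ∑ b, q b = 1) (hαA : 0 ≤ αA) (hαB : 0 ≤ αB) (hA : StrongHash p F αA βA)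
    (hB : StrongHash q G αB βB) (T : Finset (X × Y)) (w : X × Y) :
    ∑ w' ∈ T, collP p F w.1 w'.1 * collP q G w.2 w'.2 ≤
      #T * (αA / Fintype.card BA * (αB / Fintype.card BB))
        + αA / Fintype.card BA * (((T.image Prod.snd).sup fun v => #{w ∈ T | w.2 = v} : ℕ)
            * (βB + 1))
        + αB / Fintype.card BB * (((T.image Prod.fst).sup fun u => #{w ∈ T | w.1 = u} : ℕ)
            * (βA + 1))
        + (βA + 1) * (βB + 1) := by
  set a := αA / Fintype.card BA
  set b := αB / Fintype.card BB
  set eA := collExcess p F αA w.1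
  set eB := collExcess q G αB w.2
  have heA : ∀ u, 0 ≤ eA u := collExcess_nonneg hp F αA w.1
  have heB : ∀ v, 0 ≤ eB v := collExcess_nonneg hq G αB w.2
  have hrowA : ∑ w' ∈ T, eA w'.1 ≤ ((T.image Prod.fst).sup fun u => #{w ∈ T | w.1 = u} : ℕ)
      * (βA + 1) :=
    (sum_comp_le_sup_card_fiber_mul_sum T Prod.fst heA).trans <|
      mul_le_mul_of_nonneg_left (hA.sum_collExcess_le hp1 w.1) (Nat.cast_nonneg _)
  have hrowB : ∑ w' ∈ T, eB w'.2 ≤ ((T.image Prod.snd).sup fun v => #{w ∈ T | w.2 = v} : ℕ)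
      * (βB + 1) :=
    (sum_comp_le_sup_card_fiber_mul_sum T Prod.snd heB).trans <|
      mul_le_mul_of_nonneg_left (hB.sum_collExcess_le hq1 w.2) (Nat.cast_nonneg _)
  have hcross : ∑ w' ∈ T, eA w'.1 * eB w'.2 ≤ (βA + 1) * (βB + 1) :=
    calc ∑ w' ∈ T, eA w'.1 * eB w'.2
        ≤ ∑ w' : X × Y, eA w'.1 * eB w'.2 :=
          sum_le_sum_of_subset_of_nonneg (subset_univ T) fun w' _ _ =>
            mul_nonneg (heA w'.1) (heB w'.2)
      _ = (∑ u, eA u) * ∑ v, eB v := by rw [Fintype.sum_prod_type, sum_mul_sum]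
      _ ≤ (βA + 1) * (βB + 1) :=
          mul_le_mul (hA.sum_collExcess_le hp1 w.1) (hB.sum_collExcess_le hq1 w.2)
            (sum_nonneg fun v _ => heB v)
            ((sum_nonneg fun u _ => heA u).trans (hA.sum_collExcess_le hp1 w.1))
  calc ∑ w' ∈ T, collP p F w.1 w'.1 * collP q G w.2 w'.2
      ≤ ∑ w' ∈ T, (a + eA w'.1) * (b + eB w'.2) := by
        refine sum_le_sum fun w' _ => mul_le_mul (collP_le_add_collExcess F hαA w.1 w'.1)
          (collP_le_add_collExcess G hαB w.2 w'.2) (collP_nonneg hq G w.2 w'.2) ?_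
        exact (collP_nonneg hp F w.1 w'.1).trans (collP_le_add_collExcess F hαA w.1 w'.1)
    _ = #T * (a * b) + a * ∑ w' ∈ T, eB w'.2 + b * ∑ w' ∈ T, eA w'.1
          + ∑ w' ∈ T, eA w'.1 * eB w'.2 := by
        simp only [add_mul, mul_add, sum_add_distrib, ← mul_sum, ← sum_mul, sum_const,
          nsmul_eq_mul]
        ring
    _ ≤ _ := by
        have : 0 ≤ a := by positivity
        have : 0 ≤ b := by positivity
        gcongr

end CollisionSum

theorem stmt5_general {U V BA BB 𝒜 ℬ : Type*} [Fintype U] [Fintype V] [Fintype BA] [Fintype BB]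
    [Nonempty BA] [Nonempty BB] [Fintype 𝒜] [Fintype ℬ] (n : ℕ)
    (p : 𝒜 → ℝ) (hp : ∀ a, 0 ≤ p a) (hp1 : ∑ a : 𝒜, p a = 1)
    (q : ℬ → ℝ) (hq : ∀ b, 0 ≤ q b) (hq1 : ∑ b : ℬ, q b = 1)
    (F : 𝒜 → (Fin n → U) → BA) (Gf : ℬ → (Fin n → V) → BB)
    (αA βA αB βB : ℝ) (hαA : 0 ≤ αA) (hαB : 0 ≤ αB)
    (hA : StrongHash p F αA βA) (hB : StrongHash q Gf αB βB)
    (T : Finset ((Fin n → U) × (Fin n → V))) (hT : T.Nonempty) :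
    ∑ a : 𝒜, ∑ b : ℬ, ∑ ba : BA, ∑ bb : BB,
        (if ∀ w ∈ T, ¬(F a w.1 = ba ∧ Gf b w.2 = bb)
          then p a * q b * (1 / (Fintype.card BA : ℝ)) * (1 / (Fintype.card BB : ℝ))
          else 0) ≤
      αA * αB - 1
        + (Fintype.card BB : ℝ)
            * (((T.image Prod.snd).sup fun v' => (T.filter fun w => w.2 = v').card : ℕ) : ℝ)
            * αA * (βB + 1) / (T.card : ℝ)
        + (Fintype.card BA : ℝ)
            * (((T.image Prod.fst).sup fun u' => (T.filter fun w => w.1 = u').card : ℕ) : ℝ)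
            * αB * (βA + 1) / (T.card : ℝ)
        + (Fintype.card BA : ℝ) * (Fintype.card BB : ℝ) * (βA + βB + βA * βB + 1)
            / (T.card : ℝ) := by
  have hm : (0 : ℝ) < Fintype.card BA := Nat.cast_pos.2 Fintype.card_pos
  have hk : (0 : ℝ) < Fintype.card BB := Nat.cast_pos.2 Fintype.card_pos
  have hT : (0 : ℝ) < #T := Nat.cast_pos.2 hT.card_pos
  have hE := sum_jointProb_mul_cellCount F Gf T hp1 hq1
  have hS := sum_le_card_nsmul T _ _ fun w _ =>
    sum_collP_mul_collP_le hp hp1 hq hq1 hαA hαB hA hB T w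
  calc _ = ∑ ω, if (cellCount F Gf T ω : ℝ) = 0 then jointProb p q ω else 0 := by
        simp only [Fintype.sum_prod_type, cellCount, Nat.cast_eq_zero, card_eq_zero,
          filter_eq_empty_iff, Prod.mk.injEq, jointProb]
    _ ≤ _ := sum_ite_eq_zero_le_moment_ratio_sub_one (jointProb_nonneg hp hq)
        (sum_jointProb hp1 hq1) (by rw [hE]; positivity)
    _ = (∑ w ∈ T, ∑ w' ∈ T, collP p F w.1 w'.1 * collP q Gf w.2 w'.2) *
          (Fintype.card BA * Fintype.card BB) / #T ^ 2 - 1 := by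
        rw [hE, sum_jointProb_mul_cellCount_sq]
        field_simp
    _ ≤ _ := sub_le_sub_right (div_le_div_of_nonneg_right
        (mul_le_mul_of_nonneg_right hS (by positivity)) (by positivity)) 1
    _ = _ := by
        rw [nsmul_eq_mul]
        field_simp
        ring

/-- Saturation property for two independent ensembles with different domains, where
`a` and `b` are uniform on `Im A` and `Im B` respectively, all mutually independent. -/
theorem stmt5 {U V BA BB 𝒜 ℬ : Type*} [Fintype U] [Fintype V] [Fintype BA] [Fintype BB]
    [Nonempty BA] [Nonempty BB] [Fintype 𝒜] [Fintype ℬ] (n : ℕ)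
    (p : 𝒜 → ℝ) (hp : ∀ a, 0 ≤ p a) (hp1 : ∑ a : 𝒜, p a = 1)
    (q : ℬ → ℝ) (hq : ∀ b, 0 ≤ q b) (hq1 : ∑ b : ℬ, q b = 1)
    (F : 𝒜 → (Fin n → U) → BA) (Gf : ℬ → (Fin n → V) → BB)
    (αA βA αB βB : ℝ) (hαA : 0 ≤ αA) (hβA : 0 ≤ βA) (hαB : 0 ≤ αB) (hβB : 0 ≤ βB)
    (hA : StrongHash p F αA βA) (hB : StrongHash q Gf αB βB)
    (T : Finset ((Fin n → U) × (Fin n → V))) (hT : T.Nonempty) :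
    ∑ a : 𝒜, ∑ b : ℬ, ∑ ba : BA, ∑ bb : BB,
        (if ∀ w ∈ T, ¬(F a w.1 = ba ∧ Gf b w.2 = bb)
          then p a * q b * (1 / (Fintype.card BA : ℝ)) * (1 / (Fintype.card BB : ℝ))
          else 0) ≤
      αA * αB - 1
        + (Fintype.card BB : ℝ)
            * (((T.image Prod.snd).sup fun v' => (T.filter fun w => w.2 = v').card : ℕ) : ℝ)
            * αA * (βB + 1) / (T.card : ℝ)
        + (Fintype.card BA : ℝ)
            * (((T.image Prod.fst).sup fun u' => (T.filter fun w => w.1 = u').card : ℕ) : ℝ)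
            * αB * (βA + 1) / (T.card : ℝ)
        + (Fintype.card BA : ℝ) * (Fintype.card BB : ℝ) * (βA + βB + βA * βB + 1)
            / (T.card : ℝ) :=
  stmt5_general n p hp hp1 q hq hq1 F Gf αA βA αB βB hαA hαB hA hB T hT
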